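/- For any smooth function v on the unit cube Ω = (0,1)³ vanishing on ∂Ω, and any τ > 0, the operator B v = (∂_{xxyy} + ∂_{yyzz} + ∂_{zzxx} − (τ/2)∂_{xxyyzz})v satisfies ⟨v, Bv⟩ = ‖∂_{xy}v‖²_{L²} + ‖∂_{yz}v‖²_{L²} + ‖∂_{xz}v‖²_{L²} + (τ/2)‖∂_{xyz}v‖²_{L²} ≥ 0. -/

import Mathlib

open MeasureTheory Set

noncomputable def pdx4 (f : ℝ × ℝ × ℝ → ℝ) : ℝ × ℝ × ℝ → ℝ :=
  fun z => deriv (fun s => f (s, z.2.1, z.2.2)) z.1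

noncomputable def pdy4 (f : ℝ × ℝ × ℝ → ℝ) : ℝ × ℝ × ℝ → ℝ :=
  fun z => deriv (fun s => f (z.1, s, z.2.2)) z.2.1

noncomputable def pdz4 (f : ℝ × ℝ × ℝ → ℝ) : ℝ × ℝ × ℝ → ℝ :=
  fun z => deriv (fun s => f (z.1, z.2.1, s)) z.2.2

section helpers
variable {f : ℝ × ℝ × ℝ → ℝ}

lemma hasDerivAt_slice_x' (hf : Differentiable ℝ f) (x a b : ℝ) :
    HasDerivAt (fun s => f (s, a, b)) (fderiv ℝ f (x, a, b) (1, 0, 0)) x := by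
  have h1 : HasDerivAt (fun s : ℝ => (s, a, b)) ((1:ℝ), (0:ℝ), (0:ℝ)) x :=
    HasDerivAt.prodMk (hasDerivAt_id x) (hasDerivAt_const x (a, b))
  exact (hf (x, a, b)).hasFDerivAt.comp_hasDerivAt x h1

lemma hasDerivAt_slice_y' (hf : Differentiable ℝ f) (x a b : ℝ) :
    HasDerivAt (fun s => f (x, s, b)) (fderiv ℝ f (x, a, b) (0, 1, 0)) a := by
  have h1 : HasDerivAt (fun s : ℝ => (x, s, b)) ((0:ℝ), (1:ℝ), (0:ℝ)) a :=
    HasDerivAt.prodMk (hasDerivAt_const a x) (HasDerivAt.prodMk (hasDerivAt_id a) (hasDerivAt_const a b))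
  exact (hf (x, a, b)).hasFDerivAt.comp_hasDerivAt a h1

lemma hasDerivAt_slice_z' (hf : Differentiable ℝ f) (x a b : ℝ) :
    HasDerivAt (fun s => f (x, a, s)) (fderiv ℝ f (x, a, b) (0, 0, 1)) b := by
  have h1 : HasDerivAt (fun s : ℝ => (x, a, s)) ((0:ℝ), (0:ℝ), (1:ℝ)) b :=
    HasDerivAt.prodMk (hasDerivAt_const b x) (HasDerivAt.prodMk (hasDerivAt_const b a) (hasDerivAt_id b))
  exact (hf (x, a, b)).hasFDerivAt.comp_hasDerivAt b h1

lemma pdx4_eq (hf : Differentiable ℝ f) (z : ℝ × ℝ × ℝ) :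
    pdx4 f z = fderiv ℝ f z (1, 0, 0) :=
  (hasDerivAt_slice_x' hf z.1 z.2.1 z.2.2).deriv

lemma pdy4_eq (hf : Differentiable ℝ f) (z : ℝ × ℝ × ℝ) :
    pdy4 f z = fderiv ℝ f z (0, 1, 0) :=
  (hasDerivAt_slice_y' hf z.1 z.2.1 z.2.2).deriv

lemma pdz4_eq (hf : Differentiable ℝ f) (z : ℝ × ℝ × ℝ) :
    pdz4 f z = fderiv ℝ f z (0, 0, 1) :=
  (hasDerivAt_slice_z' hf z.1 z.2.1 z.2.2).deriv

lemma hasDerivAt_slice_x (hf : Differentiable ℝ f) (x a b : ℝ) :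
    HasDerivAt (fun s => f (s, a, b)) (pdx4 f (x, a, b)) x := by
  rw [pdx4_eq hf]; exact hasDerivAt_slice_x' hf x a b

lemma hasDerivAt_slice_y (hf : Differentiable ℝ f) (x a b : ℝ) :
    HasDerivAt (fun s => f (x, s, b)) (pdy4 f (x, a, b)) a := by
  rw [pdy4_eq hf]; exact hasDerivAt_slice_y' hf x a b

lemma hasDerivAt_slice_z (hf : Differentiable ℝ f) (x a b : ℝ) :
    HasDerivAt (fun s => f (x, a, s)) (pdz4 f (x, a, b)) b := by
  rw [pdz4_eq hf]; exact hasDerivAt_slice_z' hf x a b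

lemma pd_smooth (hf : ContDiff ℝ (⊤ : ℕ∞) f) (u : ℝ × ℝ × ℝ) :
    ContDiff ℝ (⊤ : ℕ∞) (fun z => fderiv ℝ f z u) :=
  (hf.fderiv_right (by simp)).clm_apply contDiff_const

lemma pdx4_smooth (hf : ContDiff ℝ (⊤ : ℕ∞) f) : ContDiff ℝ (⊤ : ℕ∞) (pdx4 f) := by
  have : pdx4 f = fun z => fderiv ℝ f z (1, 0, 0) :=
    funext (pdx4_eq (hf.differentiable (by simp)))
  rw [this]; exact pd_smooth hf _

lemma pdy4_smooth (hf : ContDiff ℝ (⊤ : ℕ∞) f) : ContDiff ℝ (⊤ : ℕ∞) (pdy4 f) := by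
  have : pdy4 f = fun z => fderiv ℝ f z (0, 1, 0) :=
    funext (pdy4_eq (hf.differentiable (by simp)))
  rw [this]; exact pd_smooth hf _

lemma pdz4_smooth (hf : ContDiff ℝ (⊤ : ℕ∞) f) : ContDiff ℝ (⊤ : ℕ∞) (pdz4 f) := by
  have : pdz4 f = fun z => fderiv ℝ f z (0, 0, 1) :=
    funext (pdz4_eq (hf.differentiable (by simp)))
  rw [this]; exact pd_smooth hf _

lemma pd_comm (hf : ContDiff ℝ (⊤ : ℕ∞) f) (u w : ℝ × ℝ × ℝ) (z : ℝ × ℝ × ℝ) :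
    fderiv ℝ (fun p => fderiv ℝ f p u) z w = fderiv ℝ (fun p => fderiv ℝ f p w) z u := by
  have hdf : Differentiable ℝ (fderiv ℝ f) :=
    (hf.fderiv_right (m := (⊤ : ℕ∞)) (by simp)).differentiable (by simp)
  have h1 : ∀ c : ℝ × ℝ × ℝ,
      fderiv ℝ (fun p => fderiv ℝ f p c) z = (fderiv ℝ (fderiv ℝ f) z).flip c := by
    intro c
    have := fderiv_clm_apply (c := fderiv ℝ f) (u := fun _ => c) (hdf z)
      (differentiableAt_const c)
    simpa using this
  rw [h1 u, h1 w]
  simp only [ContinuousLinearMap.flip_apply]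
  exact second_derivative_symmetric
    (fun y => (hf.differentiable (by simp) y).hasFDerivAt)
    (hdf z).hasFDerivAt w u

end helpers

section comm
variable {f : ℝ × ℝ × ℝ → ℝ}

lemma comm_xy (hf : ContDiff ℝ (⊤ : ℕ∞) f) : pdx4 (pdy4 f) = pdy4 (pdx4 f) := by
  have hd := hf.differentiable (by simp)
  funext z
  rw [pdx4_eq ((pdy4_smooth hf).differentiable (by simp)),
      pdy4_eq ((pdx4_smooth hf).differentiable (by simp)),
      show pdy4 f = fun p => fderiv ℝ f p (0,1,0) from funext (pdy4_eq hd),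
      show pdx4 f = fun p => fderiv ℝ f p (1,0,0) from funext (pdx4_eq hd)]
  exact pd_comm hf _ _ z

lemma comm_yz (hf : ContDiff ℝ (⊤ : ℕ∞) f) : pdy4 (pdz4 f) = pdz4 (pdy4 f) := by
  have hd := hf.differentiable (by simp)
  funext z
  rw [pdy4_eq ((pdz4_smooth hf).differentiable (by simp)),
      pdz4_eq ((pdy4_smooth hf).differentiable (by simp)),
      show pdz4 f = fun p => fderiv ℝ f p (0,0,1) from funext (pdz4_eq hd),
      show pdy4 f = fun p => fderiv ℝ f p (0,1,0) from funext (pdy4_eq hd)]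
  exact pd_comm hf _ _ z

lemma comm_xz (hf : ContDiff ℝ (⊤ : ℕ∞) f) : pdx4 (pdz4 f) = pdz4 (pdx4 f) := by
  have hd := hf.differentiable (by simp)
  funext z
  rw [pdx4_eq ((pdz4_smooth hf).differentiable (by simp)),
      pdz4_eq ((pdx4_smooth hf).differentiable (by simp)),
      show pdz4 f = fun p => fderiv ℝ f p (0,0,1) from funext (pdz4_eq hd),
      show pdx4 f = fun p => fderiv ℝ f p (1,0,0) from funext (pdx4_eq hd)]
  exact pd_comm hf _ _ z

end comm

section fub
open intervalIntegral

abbrev I01 : Set ℝ := Set.Icc 0 1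
abbrev Q3 : Set (ℝ × ℝ × ℝ) := I01 ×ˢ (I01 ×ˢ I01)

lemma isCompact_Q3 : IsCompact Q3 := isCompact_Icc.prod (isCompact_Icc.prod isCompact_Icc)

variable {F : ℝ × ℝ × ℝ → ℝ}

lemma intOn (hF : Continuous F) : IntegrableOn F Q3 volume :=
  hF.continuousOn.integrableOn_compact isCompact_Q3

lemma fub_z (hF : Continuous F) :
    ∫ z in Q3, F z = ∫ x in I01, ∫ y in I01, ∫ z in I01, F (x, y, z) := by
  have h1 : IntegrableOn F Q3 ((volume : Measure ℝ).prod volume) := intOn hF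
  calc ∫ z in Q3, F z = ∫ x in I01, ∫ p in I01 ×ˢ I01, F (x, p) := setIntegral_prod F h1
    _ = _ := by
        refine setIntegral_congr_fun measurableSet_Icc fun x _ => ?_
        exact setIntegral_prod (fun p => F (x, p))
          ((hF.comp (continuous_const.prodMk continuous_id)).continuousOn.integrableOn_compact
            (isCompact_Icc.prod isCompact_Icc))

lemma fub_y (hF : Continuous F) :
    ∫ z in Q3, F z = ∫ x in I01, ∫ z in I01, ∫ y in I01, F (x, y, z) := by
  have h1 : IntegrableOn F Q3 ((volume : Measure ℝ).prod volume) := intOn hF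
  calc ∫ z in Q3, F z = ∫ x in I01, ∫ p in I01 ×ˢ I01, F (x, p) := setIntegral_prod F h1
    _ = _ := by
        refine setIntegral_congr_fun measurableSet_Icc fun x _ => ?_
        have h2 : Integrable (fun p : ℝ × ℝ => F (x, p))
            (((volume : Measure ℝ).restrict I01).prod ((volume : Measure ℝ).restrict I01)) := by
          rw [Measure.prod_restrict]
          exact (hF.comp (continuous_const.prodMk continuous_id)).continuousOn.integrableOn_compact
            (isCompact_Icc.prod isCompact_Icc)
        calc ∫ p in I01 ×ˢ I01, F (x, p)
            = ∫ p, F (x, p) ∂(((volume : Measure ℝ).restrict I01).prod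
                ((volume : Measure ℝ).restrict I01)) := by
              rw [Measure.prod_restrict]; rfl
          _ = ∫ z in I01, ∫ y in I01, F (x, y, z) := integral_prod_symm _ h2

lemma fub_x (hF : Continuous F) :
    ∫ z in Q3, F z = ∫ w in I01 ×ˢ I01, ∫ x in I01, F (x, w.1, w.2) := by
  have h2 : Integrable F
      (((volume : Measure ℝ).restrict I01).prod
        (((volume : Measure ℝ).prod (volume : Measure ℝ)).restrict (I01 ×ˢ I01))) := by
    rw [Measure.prod_restrict]
    exact intOn hF
  calc ∫ z in Q3, F z
      = ∫ z, F z ∂(((volume : Measure ℝ).restrict I01).prod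
          (((volume : Measure ℝ).prod (volume : Measure ℝ)).restrict (I01 ×ˢ I01))) := by
        rw [Measure.prod_restrict]; rfl
  _ = ∫ w in I01 ×ˢ I01, ∫ x in I01, F (x, w) := integral_prod_symm _ h2
  _ = _ := rfl

end fub

section ibp

lemma measure_pair_zero : (volume : Measure ℝ) ({0, 1} : Set ℝ) = 0 := by
  exact (Set.toFinite _).measure_zero volume

lemma ae_mem_Ioo : ∀ᵐ x : ℝ, x ∈ I01 → x ∈ Set.Ioo (0:ℝ) 1 := by
  have h : ∀ᵐ x : ℝ, x ∉ ({0, 1} : Set ℝ) := by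
    rw [MeasureTheory.ae_iff]
    refine measure_mono_null (fun x hx => ?_) measure_pair_zero
    simp only [Set.mem_setOf_eq, not_not] at hx
    exact hx
  filter_upwards [h] with x hx hmem
  simp only [Set.mem_insert_iff, Set.mem_singleton_iff, not_or] at hx
  exact ⟨lt_of_le_of_ne hmem.1 (Ne.symm hx.1), lt_of_le_of_ne hmem.2 hx.2⟩

lemma ae_mem_Ioo2 : ∀ᵐ w : ℝ × ℝ, w ∈ I01 ×ˢ I01 →
    (w.1 ∈ Set.Ioo (0:ℝ) 1 ∧ w.2 ∈ Set.Ioo (0:ℝ) 1) := by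
  have h1 : (volume : Measure (ℝ × ℝ)) (({0, 1} : Set ℝ) ×ˢ (Set.univ : Set ℝ)) = 0 := by
    rw [show (volume : Measure (ℝ × ℝ)) = (volume : Measure ℝ).prod volume from rfl,
      Measure.prod_prod, measure_pair_zero, zero_mul]
  have h2 : (volume : Measure (ℝ × ℝ)) ((Set.univ : Set ℝ) ×ˢ ({0, 1} : Set ℝ)) = 0 := by
    rw [show (volume : Measure (ℝ × ℝ)) = (volume : Measure ℝ).prod volume from rfl,
      Measure.prod_prod, measure_pair_zero, mul_zero]
  have e1 : ∀ᵐ w : ℝ × ℝ, w.1 ∉ ({0, 1} : Set ℝ) := by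
    rw [MeasureTheory.ae_iff]
    refine measure_mono_null (fun w hw => ?_) h1
    simp only [Set.mem_setOf_eq, not_not] at hw
    exact ⟨hw, Set.mem_univ _⟩
  have e2 : ∀ᵐ w : ℝ × ℝ, w.2 ∉ ({0, 1} : Set ℝ) := by
    rw [MeasureTheory.ae_iff]
    refine measure_mono_null (fun w hw => ?_) h2
    simp only [Set.mem_setOf_eq, not_not] at hw
    exact ⟨Set.mem_univ _, hw⟩
  filter_upwards [e1, e2] with w hw1 hw2 hmem
  simp only [Set.mem_insert_iff, Set.mem_singleton_iff, not_or] at hw1 hw2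
  exact ⟨⟨lt_of_le_of_ne hmem.1.1 (Ne.symm hw1.1), lt_of_le_of_ne hmem.1.2 hw1.2⟩,
    ⟨lt_of_le_of_ne hmem.2.1 (Ne.symm hw2.1), lt_of_le_of_ne hmem.2.2 hw2.2⟩⟩

lemma ibp1 {u u' g g' : ℝ → ℝ} (hu : ∀ x ∈ Set.uIcc (0:ℝ) 1, HasDerivAt u (u' x) x)
    (hg : ∀ x ∈ Set.uIcc (0:ℝ) 1, HasDerivAt g (g' x) x)
    (hu' : Continuous u') (hg' : Continuous g') (h0 : u 0 = 0) (h1 : u 1 = 0) :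
    ∫ x in I01, u x * g' x = -∫ x in I01, u' x * g x := by
  rw [MeasureTheory.integral_Icc_eq_integral_Ioc, MeasureTheory.integral_Icc_eq_integral_Ioc,
    ← intervalIntegral.integral_of_le (zero_le_one (α := ℝ)),
    ← intervalIntegral.integral_of_le (zero_le_one (α := ℝ)),
    intervalIntegral.integral_mul_deriv_eq_deriv_mul hu hg
      (hu'.intervalIntegrable 0 1) (hg'.intervalIntegrable 0 1), h0, h1]
  ring

end ibp

section ibp3
variable {f g : ℝ × ℝ × ℝ → ℝ}

lemma ibp_x (hf : ContDiff ℝ (⊤ : ℕ∞) f) (hg : ContDiff ℝ (⊤ : ℕ∞) g)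
    (h0 : ∀ y z : ℝ, y ∈ Set.Ioo (0:ℝ) 1 → z ∈ Set.Ioo (0:ℝ) 1 →
      f (0, y, z) = 0 ∧ f (1, y, z) = 0) :
    ∫ z in Q3, f z * pdx4 g z = -∫ z in Q3, pdx4 f z * g z := by
  have hdf := hf.differentiable (by simp)
  have hdg := hg.differentiable (by simp)
  have cpf := (pdx4_smooth hf).continuous
  have cpg := (pdx4_smooth hg).continuous
  rw [fub_x (F := fun z => f z * pdx4 g z) (hf.continuous.mul cpg),
    fub_x (F := fun z => pdx4 f z * g z) (cpf.mul hg.continuous), ← MeasureTheory.integral_neg]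
  refine setIntegral_congr_ae (measurableSet_Icc.prod measurableSet_Icc) ?_
  filter_upwards [ae_mem_Ioo2] with w hw hmem
  obtain ⟨hy, hz⟩ := hw hmem
  exact ibp1 (fun x _ => hasDerivAt_slice_x hdf x w.1 w.2)
    (fun x _ => hasDerivAt_slice_x hdg x w.1 w.2)
    (cpf.comp (by fun_prop)) (cpg.comp (by fun_prop))
    (h0 w.1 w.2 hy hz).1 (h0 w.1 w.2 hy hz).2

lemma ibp_y (hf : ContDiff ℝ (⊤ : ℕ∞) f) (hg : ContDiff ℝ (⊤ : ℕ∞) g)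
    (h0 : ∀ x z : ℝ, x ∈ Set.Ioo (0:ℝ) 1 → z ∈ Set.Ioo (0:ℝ) 1 →
      f (x, 0, z) = 0 ∧ f (x, 1, z) = 0) :
    ∫ z in Q3, f z * pdy4 g z = -∫ z in Q3, pdy4 f z * g z := by
  have hdf := hf.differentiable (by simp)
  have hdg := hg.differentiable (by simp)
  have cpf := (pdy4_smooth hf).continuous
  have cpg := (pdy4_smooth hg).continuous
  rw [fub_y (F := fun z => f z * pdy4 g z) (hf.continuous.mul cpg),
    fub_y (F := fun z => pdy4 f z * g z) (cpf.mul hg.continuous), ← MeasureTheory.integral_neg]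
  refine setIntegral_congr_ae measurableSet_Icc ?_
  filter_upwards [ae_mem_Ioo] with x hx hmem
  rw [← MeasureTheory.integral_neg]
  refine setIntegral_congr_ae measurableSet_Icc ?_
  filter_upwards [ae_mem_Ioo] with z hz hmemz
  exact ibp1 (fun y _ => hasDerivAt_slice_y hdf x y z)
    (fun y _ => hasDerivAt_slice_y hdg x y z)
    (cpf.comp (by fun_prop)) (cpg.comp (by fun_prop))
    (h0 x z (hx hmem) (hz hmemz)).1 (h0 x z (hx hmem) (hz hmemz)).2

lemma ibp_z (hf : ContDiff ℝ (⊤ : ℕ∞) f) (hg : ContDiff ℝ (⊤ : ℕ∞) g)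
    (h0 : ∀ x y : ℝ, x ∈ Set.Ioo (0:ℝ) 1 → y ∈ Set.Ioo (0:ℝ) 1 →
      f (x, y, 0) = 0 ∧ f (x, y, 1) = 0) :
    ∫ z in Q3, f z * pdz4 g z = -∫ z in Q3, pdz4 f z * g z := by
  have hdf := hf.differentiable (by simp)
  have hdg := hg.differentiable (by simp)
  have cpf := (pdz4_smooth hf).continuous
  have cpg := (pdz4_smooth hg).continuous
  rw [fub_z (F := fun z => f z * pdz4 g z) (hf.continuous.mul cpg),
    fub_z (F := fun z => pdz4 f z * g z) (cpf.mul hg.continuous), ← MeasureTheory.integral_neg]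
  refine setIntegral_congr_ae measurableSet_Icc ?_
  filter_upwards [ae_mem_Ioo] with x hx hmem
  rw [← MeasureTheory.integral_neg]
  refine setIntegral_congr_ae measurableSet_Icc ?_
  filter_upwards [ae_mem_Ioo] with y hy hmemy
  exact ibp1 (fun z _ => hasDerivAt_slice_z hdf x y z)
    (fun z _ => hasDerivAt_slice_z hdg x y z)
    (cpf.comp (by fun_prop)) (cpg.comp (by fun_prop))
    (h0 x y (hx hmem) (hy hmemy)).1 (h0 x y (hx hmem) (hy hmemy)).2

end ibp3

lemma deriv_zero_of_ev {h : ℝ → ℝ} {x : ℝ} (he : ∀ᶠ s in nhds x, h s = 0) : deriv h x = 0 := by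
  have h2 : deriv h x = deriv (fun _ : ℝ => (0:ℝ)) x :=
    Filter.EventuallyEq.deriv_eq (by filter_upwards [he] with s hs using hs)
  simpa using h2

/-- For smooth `v` on the unit cube vanishing on the boundary and `τ > 0`, the operator
`B = ∂_{xxyy} + ∂_{yyzz} + ∂_{zzxx} − (τ/2)∂_{xxyyzz}` satisfies
`⟨v, Bv⟩ = ‖∂_{xy}v‖² + ‖∂_{yz}v‖² + ‖∂_{xz}v‖² + (τ/2)‖∂_{xyz}v‖² ≥ 0`. -/
theorem stmt4 (τ : ℝ) (hτ : 0 < τ) (v : ℝ × ℝ × ℝ → ℝ) (hv : ContDiff ℝ (⊤ : ℕ∞) v)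
    (hbv : ∀ z ∈ Set.Icc (0 : ℝ) 1 ×ˢ (Set.Icc (0 : ℝ) 1 ×ˢ Set.Icc (0 : ℝ) 1),
      (z.1 = 0 ∨ z.1 = 1 ∨ z.2.1 = 0 ∨ z.2.1 = 1 ∨ z.2.2 = 0 ∨ z.2.2 = 1) → v z = 0) :
    let Q : Set (ℝ × ℝ × ℝ) :=
      Set.Icc (0 : ℝ) 1 ×ˢ (Set.Icc (0 : ℝ) 1 ×ˢ Set.Icc (0 : ℝ) 1)
    let Bv : ℝ × ℝ × ℝ → ℝ := fun z =>
      pdx4 (pdx4 (pdy4 (pdy4 v))) z + pdy4 (pdy4 (pdz4 (pdz4 v))) z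
        + pdz4 (pdz4 (pdx4 (pdx4 v))) z
        - (τ / 2) * pdx4 (pdx4 (pdy4 (pdy4 (pdz4 (pdz4 v))))) z
    ((∫ z in Q, v z * Bv z)
        = (∫ z in Q, (pdx4 (pdy4 v) z) ^ 2) + (∫ z in Q, (pdy4 (pdz4 v) z) ^ 2)
          + (∫ z in Q, (pdx4 (pdz4 v) z) ^ 2)
          + (τ / 2) * ∫ z in Q, (pdx4 (pdy4 (pdz4 v)) z) ^ 2) ∧
    0 ≤ ∫ z in Q, v z * Bv z := by
  intro Q Bv
  have hvs : ContDiff ℝ (⊤ : ℕ∞) v := hv.of_le (by simp)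
  -- boundary facts
  have hbx : ∀ y z : ℝ, y ∈ Set.Ioo (0:ℝ) 1 → z ∈ Set.Ioo (0:ℝ) 1 →
      v (0, y, z) = 0 ∧ v (1, y, z) = 0 := fun y z hy hz =>
    ⟨hbv _ ⟨Set.left_mem_Icc.2 zero_le_one, Set.Ioo_subset_Icc_self hy,
        Set.Ioo_subset_Icc_self hz⟩ (Or.inl rfl),
      hbv _ ⟨Set.right_mem_Icc.2 zero_le_one, Set.Ioo_subset_Icc_self hy,
        Set.Ioo_subset_Icc_self hz⟩ (Or.inr (Or.inl rfl))⟩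
  have hby : ∀ x z : ℝ, x ∈ Set.Ioo (0:ℝ) 1 → z ∈ Set.Ioo (0:ℝ) 1 →
      v (x, 0, z) = 0 ∧ v (x, 1, z) = 0 := fun x z hx hz =>
    ⟨hbv _ ⟨Set.Ioo_subset_Icc_self hx, Set.left_mem_Icc.2 zero_le_one,
        Set.Ioo_subset_Icc_self hz⟩ (by tauto),
      hbv _ ⟨Set.Ioo_subset_Icc_self hx, Set.right_mem_Icc.2 zero_le_one,
        Set.Ioo_subset_Icc_self hz⟩ (by tauto)⟩
  have hbz : ∀ x y : ℝ, x ∈ Set.Ioo (0:ℝ) 1 → y ∈ Set.Ioo (0:ℝ) 1 →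
      v (x, y, 0) = 0 ∧ v (x, y, 1) = 0 := fun x y hx hy =>
    ⟨hbv _ ⟨Set.Ioo_subset_Icc_self hx, Set.Ioo_subset_Icc_self hy,
        Set.left_mem_Icc.2 zero_le_one⟩ (by tauto),
      hbv _ ⟨Set.Ioo_subset_Icc_self hx, Set.Ioo_subset_Icc_self hy,
        Set.right_mem_Icc.2 zero_le_one⟩ (by tauto)⟩
  -- first-derivative boundary facts
  have hx_face : ∀ x y z : ℝ, x ∈ Set.Ioo (0:ℝ) 1 → y ∈ I01 → z ∈ I01 →
      (y = 0 ∨ y = 1 ∨ z = 0 ∨ z = 1) → pdx4 v (x, y, z) = 0 := by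
    intro x y z hx hy hz hside
    apply deriv_zero_of_ev
    filter_upwards [isOpen_Ioo.mem_nhds hx] with s hs
    exact hbv (s, y, z) ⟨Set.Ioo_subset_Icc_self hs, hy, hz⟩ (by tauto)
  have hy_face : ∀ x y z : ℝ, y ∈ Set.Ioo (0:ℝ) 1 → x ∈ I01 → z ∈ I01 →
      (x = 0 ∨ x = 1 ∨ z = 0 ∨ z = 1) → pdy4 v (x, y, z) = 0 := by
    intro x y z hy hx hz hside
    apply deriv_zero_of_ev
    filter_upwards [isOpen_Ioo.mem_nhds hy] with s hs
    exact hbv (x, s, z) ⟨hx, Set.Ioo_subset_Icc_self hs, hz⟩ (by tauto)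
  have hz_face : ∀ x y z : ℝ, z ∈ Set.Ioo (0:ℝ) 1 → x ∈ I01 → y ∈ I01 →
      (x = 0 ∨ x = 1 ∨ y = 0 ∨ y = 1) → pdz4 v (x, y, z) = 0 := by
    intro x y z hz hx hy hside
    apply deriv_zero_of_ev
    filter_upwards [isOpen_Ioo.mem_nhds hz] with s hs
    exact hbv (x, y, s) ⟨hx, hy, Set.Ioo_subset_Icc_self hs⟩ (by tauto)
  -- second-derivative boundary fact
  have hyx_face : ∀ x y z : ℝ, x ∈ Set.Ioo (0:ℝ) 1 → y ∈ Set.Ioo (0:ℝ) 1 → z ∈ I01 →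
      (z = 0 ∨ z = 1) → pdy4 (pdx4 v) (x, y, z) = 0 := by
    intro x y z hx hy hz hside
    apply deriv_zero_of_ev
    filter_upwards [isOpen_Ioo.mem_nhds hy] with s hs
    exact hx_face x s z hx (Set.Ioo_subset_Icc_self hs) hz (by tauto)
  -- the four pieces
  have hT1 : ∫ z in Q3, v z * pdx4 (pdx4 (pdy4 (pdy4 v))) z
      = ∫ z in Q3, (pdx4 (pdy4 v) z) ^ 2 := by
    rw [ibp_x hvs (pdx4_smooth (pdy4_smooth (pdy4_smooth hvs))) hbx,
      show pdx4 (pdy4 (pdy4 v)) = pdy4 (pdy4 (pdx4 v)) by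
        rw [comm_xy (pdy4_smooth hvs), comm_xy hvs],
      ibp_y (pdx4_smooth hvs) (pdy4_smooth (pdx4_smooth hvs))
        (fun x z hx hz => ⟨hx_face x 0 z hx (Set.left_mem_Icc.2 zero_le_one)
            (Set.Ioo_subset_Icc_self hz) (by tauto),
          hx_face x 1 z hx (Set.right_mem_Icc.2 zero_le_one)
            (Set.Ioo_subset_Icc_self hz) (by tauto)⟩),
      neg_neg, comm_xy hvs]
    simp_rw [pow_two]
  have hT2 : ∫ z in Q3, v z * pdy4 (pdy4 (pdz4 (pdz4 v))) z
      = ∫ z in Q3, (pdy4 (pdz4 v) z) ^ 2 := by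
    rw [ibp_y hvs (pdy4_smooth (pdz4_smooth (pdz4_smooth hvs))) hby,
      show pdy4 (pdz4 (pdz4 v)) = pdz4 (pdz4 (pdy4 v)) by
        rw [comm_yz (pdz4_smooth hvs), comm_yz hvs],
      ibp_z (pdy4_smooth hvs) (pdz4_smooth (pdy4_smooth hvs))
        (fun x y hx hy => ⟨hy_face x y 0 hy (Set.Ioo_subset_Icc_self hx)
            (Set.left_mem_Icc.2 zero_le_one) (by tauto),
          hy_face x y 1 hy (Set.Ioo_subset_Icc_self hx)
            (Set.right_mem_Icc.2 zero_le_one) (by tauto)⟩),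
      neg_neg, comm_yz hvs]
    simp_rw [pow_two]
  have hT3 : ∫ z in Q3, v z * pdz4 (pdz4 (pdx4 (pdx4 v))) z
      = ∫ z in Q3, (pdx4 (pdz4 v) z) ^ 2 := by
    rw [ibp_z hvs (pdz4_smooth (pdx4_smooth (pdx4_smooth hvs))) hbz,
      show pdz4 (pdx4 (pdx4 v)) = pdx4 (pdx4 (pdz4 v)) by
        rw [← comm_xz (pdx4_smooth hvs), ← comm_xz hvs],
      ibp_x (pdz4_smooth hvs) (pdx4_smooth (pdz4_smooth hvs))
        (fun y z hy hz => ⟨hz_face 0 y z hz (Set.left_mem_Icc.2 zero_le_one)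
            (Set.Ioo_subset_Icc_self hy) (by tauto),
          hz_face 1 y z hz (Set.right_mem_Icc.2 zero_le_one)
            (Set.Ioo_subset_Icc_self hy) (by tauto)⟩),
      neg_neg]
    simp_rw [pow_two]
  have hT4 : ∫ z in Q3, v z * pdx4 (pdx4 (pdy4 (pdy4 (pdz4 (pdz4 v))))) z
      = -∫ z in Q3, (pdx4 (pdy4 (pdz4 v)) z) ^ 2 := by
    have hw : ContDiff ℝ (⊤ : ℕ∞) (pdz4 (pdz4 v)) := pdz4_smooth (pdz4_smooth hvs)
    rw [ibp_x hvs (pdx4_smooth (pdy4_smooth (pdy4_smooth hw))) hbx,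
      show pdx4 (pdy4 (pdy4 (pdz4 (pdz4 v)))) = pdy4 (pdy4 (pdx4 (pdz4 (pdz4 v)))) by
        rw [comm_xy (pdy4_smooth hw), comm_xy hw],
      ibp_y (pdx4_smooth hvs) (pdy4_smooth (pdx4_smooth hw))
        (fun x z hx hz => ⟨hx_face x 0 z hx (Set.left_mem_Icc.2 zero_le_one)
            (Set.Ioo_subset_Icc_self hz) (by tauto),
          hx_face x 1 z hx (Set.right_mem_Icc.2 zero_le_one)
            (Set.Ioo_subset_Icc_self hz) (by tauto)⟩),
      neg_neg,
      show pdy4 (pdx4 (pdz4 (pdz4 v))) = pdz4 (pdz4 (pdy4 (pdx4 v))) by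
        rw [comm_xz (pdz4_smooth hvs), comm_xz hvs,
          comm_yz (pdz4_smooth (pdx4_smooth hvs)), comm_yz (pdx4_smooth hvs)],
      ibp_z (pdy4_smooth (pdx4_smooth hvs)) (pdz4_smooth (pdy4_smooth (pdx4_smooth hvs)))
        (fun x y hx hy => ⟨hyx_face x y 0 hx hy (Set.left_mem_Icc.2 zero_le_one) (by tauto),
          hyx_face x y 1 hx hy (Set.right_mem_Icc.2 zero_le_one) (by tauto)⟩),
      show pdx4 (pdy4 (pdz4 v)) = pdz4 (pdy4 (pdx4 v)) by
        rw [comm_yz hvs, comm_xz (pdy4_smooth hvs), comm_xy hvs]]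
    simp_rw [pow_two]
  -- splitting the integral
  have c1 : Continuous fun z => v z * pdx4 (pdx4 (pdy4 (pdy4 v))) z :=
    hvs.continuous.mul (pdx4_smooth (pdx4_smooth (pdy4_smooth (pdy4_smooth hvs)))).continuous
  have c2 : Continuous fun z => v z * pdy4 (pdy4 (pdz4 (pdz4 v))) z :=
    hvs.continuous.mul (pdy4_smooth (pdy4_smooth (pdz4_smooth (pdz4_smooth hvs)))).continuous
  have c3 : Continuous fun z => v z * pdz4 (pdz4 (pdx4 (pdx4 v))) z :=
    hvs.continuous.mul (pdz4_smooth (pdz4_smooth (pdx4_smooth (pdx4_smooth hvs)))).continuous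
  have c4 : Continuous fun z => v z * pdx4 (pdx4 (pdy4 (pdy4 (pdz4 (pdz4 v))))) z :=
    hvs.continuous.mul (pdx4_smooth (pdx4_smooth (pdy4_smooth (pdy4_smooth
      (pdz4_smooth (pdz4_smooth hvs)))))).continuous
  have hsplit : ∫ z in Q, v z * Bv z
      = ((∫ z in Q3, v z * pdx4 (pdx4 (pdy4 (pdy4 v))) z)
        + (∫ z in Q3, v z * pdy4 (pdy4 (pdz4 (pdz4 v))) z)
        + (∫ z in Q3, v z * pdz4 (pdz4 (pdx4 (pdx4 v))) z))
        - (τ / 2) * ∫ z in Q3, v z * pdx4 (pdx4 (pdy4 (pdy4 (pdz4 (pdz4 v))))) z := by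
    have : ∫ z in Q, v z * Bv z
        = ∫ z in Q3, ((v z * pdx4 (pdx4 (pdy4 (pdy4 v))) z
            + v z * pdy4 (pdy4 (pdz4 (pdz4 v))) z
            + v z * pdz4 (pdz4 (pdx4 (pdx4 v))) z)
          - (τ / 2) * (v z * pdx4 (pdx4 (pdy4 (pdy4 (pdz4 (pdz4 v))))) z)) := by
      refine setIntegral_congr_fun
        (measurableSet_Icc.prod (measurableSet_Icc.prod measurableSet_Icc)) fun z _ => ?_
      show v z * Bv z = _
      simp only [Bv]
      ring
    have i1 : IntegrableOn (fun z => v z * pdx4 (pdx4 (pdy4 (pdy4 v))) z) Q3 volume := intOn c1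
    have i2 : IntegrableOn (fun z => v z * pdy4 (pdy4 (pdz4 (pdz4 v))) z) Q3 volume := intOn c2
    have i3 : IntegrableOn (fun z => v z * pdz4 (pdz4 (pdx4 (pdx4 v))) z) Q3 volume := intOn c3
    have i12 : IntegrableOn (fun z => v z * pdx4 (pdx4 (pdy4 (pdy4 v))) z
        + v z * pdy4 (pdy4 (pdz4 (pdz4 v))) z) Q3 volume := intOn (c1.add c2)
    have i123 : IntegrableOn (fun z => v z * pdx4 (pdx4 (pdy4 (pdy4 v))) z
        + v z * pdy4 (pdy4 (pdz4 (pdz4 v))) z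
        + v z * pdz4 (pdz4 (pdx4 (pdx4 v))) z) Q3 volume := intOn ((c1.add c2).add c3)
    have i4 : IntegrableOn (fun z => τ / 2 * (v z
        * pdx4 (pdx4 (pdy4 (pdy4 (pdz4 (pdz4 v))))) z)) Q3 volume :=
      intOn (continuous_const.mul c4)
    rw [this, MeasureTheory.integral_sub i123 i4,
      MeasureTheory.integral_add i12 i3,
      MeasureTheory.integral_add i1 i2,
      MeasureTheory.integral_const_mul]
  have hmain : ∫ z in Q, v z * Bv z
      = (∫ z in Q, (pdx4 (pdy4 v) z) ^ 2) + (∫ z in Q, (pdy4 (pdz4 v) z) ^ 2)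
        + (∫ z in Q, (pdx4 (pdz4 v) z) ^ 2)
        + (τ / 2) * ∫ z in Q, (pdx4 (pdy4 (pdz4 v)) z) ^ 2 := by
    rw [hsplit, hT1, hT2, hT3, hT4]
    show _ = (∫ z in Q3, (pdx4 (pdy4 v) z) ^ 2) + (∫ z in Q3, (pdy4 (pdz4 v) z) ^ 2)
        + (∫ z in Q3, (pdx4 (pdz4 v) z) ^ 2)
        + (τ / 2) * ∫ z in Q3, (pdx4 (pdy4 (pdz4 v)) z) ^ 2
    ring
  refine ⟨hmain, ?_⟩
  rw [hmain]
  have hQm : MeasurableSet Q := measurableSet_Icc.prod (measurableSet_Icc.prod measurableSet_Icc)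
  have n1 : (0:ℝ) ≤ ∫ z in Q, (pdx4 (pdy4 v) z) ^ 2 :=
    setIntegral_nonneg hQm fun z _ => sq_nonneg _
  have n2 : (0:ℝ) ≤ ∫ z in Q, (pdy4 (pdz4 v) z) ^ 2 :=
    setIntegral_nonneg hQm fun z _ => sq_nonneg _
  have n3 : (0:ℝ) ≤ ∫ z in Q, (pdx4 (pdz4 v) z) ^ 2 :=
    setIntegral_nonneg hQm fun z _ => sq_nonneg _
  have n4 : (0:ℝ) ≤ ∫ z in Q, (pdx4 (pdy4 (pdz4 v)) z) ^ 2 :=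
    setIntegral_nonneg hQm fun z _ => sq_nonneg _
  have : (0:ℝ) ≤ τ / 2 := by linarith
  nlinarith
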